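/- arXiv:1807.03936 — 5 statements merged into one kernel-verified Lean document; each statement's English description precedes it below -/
import Mathlib

section
/- For real numbers 0 < ulu ≤ olu, for any u_n, u_m with ulu ≤ u_n ≤ olu, ulu ≤ u_m ≤ olu, and any α ≥ 0 with u_n + α ≤ olu, the inequality √((u_n+α)·u_m) − √(u_n·u_m) ≥ (α/2)·√(ulu/(2·olu − ulu)) holds. -/
/-- Key concavity-based bound for monotonicity of the DC power flow mapping. -/
theorem sqrt_diff_lower_bound (ulu olu un um α : ℝ)
    (hulu : 0 < ulu) (hle : ulu ≤ olu)
    (hun1 : ulu ≤ un) (hun2 : un ≤ olu)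
    (hum1 : ulu ≤ um) (hum2 : um ≤ olu)
    (hα : 0 ≤ α) (hsum : un + α ≤ olu) :
    Real.sqrt ((un + α) * um) - Real.sqrt (un * um) ≥
      (α / 2) * Real.sqrt (ulu / (2 * olu - ulu)) := by
  have h2 : 0 < 2 * olu - ulu := by linarith
  have hum0 : 0 < um := lt_of_lt_of_le hulu hum1
  set s := Real.sqrt (ulu / (2 * olu - ulu)) with hs
  have hs0 : 0 ≤ s := Real.sqrt_nonneg _
  have hs2 : s ^ 2 = ulu / (2 * olu - ulu) := Real.sq_sqrt (by positivity)
  set a := Real.sqrt ((un + α) * um) with ha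
  set b := Real.sqrt (un * um) with hb
  have ha2 : a ^ 2 = (un + α) * um := Real.sq_sqrt (by nlinarith)
  have hb2 : b ^ 2 = un * um := Real.sq_sqrt (by nlinarith)
  have ha0 : 0 < a := Real.sqrt_pos.mpr (by nlinarith)
  have hb0 : 0 ≤ b := Real.sqrt_nonneg _
  have hab : b ≤ a := Real.sqrt_le_sqrt (by nlinarith)
  have hsa : s * a ≤ um := by
    have h : (s * a) ^ 2 ≤ um ^ 2 := by
      rw [mul_pow, hs2, ha2, div_mul_eq_mul_div, div_le_iff₀ h2]
      nlinarith
    nlinarith [mul_nonneg hs0 ha0.le]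
  have hsb : s * b ≤ um := le_trans (by nlinarith) hsa
  have hkey : a ^ 2 - b ^ 2 = α * um := by rw [ha2, hb2]; ring
  have hfin : (α / 2) * s * (a + b) ≤ (a - b) * (a + b) := by
    nlinarith [mul_le_mul_of_nonneg_left hsa hα, mul_le_mul_of_nonneg_left hsb hα]
  have hpos : 0 < a + b := by linarith
  have := le_of_mul_le_mul_right hfin hpos
  linarith
end

section
/- Under the assumptions: (i) f maps U = [ulu·1, olu·1] monotonically, (ii) there exists a solution u_s ∈ U with f(u_s) = u_s, and (iii) for all n, olu·g_n^o + √(olu)·i_n^o + p_n^o ≥ 0, the iterates u^{t+1} := f(u^t) initialized at ū = olu·1 converge to the high-voltage solution u_hv, i.e., a fixed point of f satisfying u_hv ≥ u for every fixed point u of f in [u_s, ū]. -/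
/-!
Condition (iii) makes `ū = olu·1` a supersolution, `f ū ≤ ū`. Since `f` is monotone on `U`,
for every fixed point `u ∈ [u_s, ū]` the box `[u, ū]` is mapped into itself, so the iterates
starting at `ū` decrease and stay above every such `u`. A decreasing sequence bounded below
converges; by continuity of `f` its limit is a fixed point, and it dominates every fixed
point in `[u_s, ū]`.
-/

open Finset Set Filter Topology Function

section MonotoneOnIterate

variable {α : Type*} [Preorder α] {f : α → α} {lb ub w : α}

theorem mapsTo_Icc_of_monotoneOn (hf : MonotoneOn f (Icc lb ub)) (hlb : lb ≤ w)
    (hw : IsFixedPt f w) (hub : f ub ≤ ub) : MapsTo f (Icc w ub) (Icc w ub) := by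
  intro x ⟨hwx, hxub⟩
  have hx : x ∈ Icc lb ub := ⟨hlb.trans hwx, hxub⟩
  have hw' : w ∈ Icc lb ub := ⟨hlb, hwx.trans hxub⟩
  have hub' : ub ∈ Icc lb ub := ⟨hx.1.trans hxub, le_rfl⟩
  exact ⟨hw ▸ hf hw' hx hwx, (hf hx hub' hxub).trans hub⟩

theorem iterate_mem_Icc_of_monotoneOn (hf : MonotoneOn f (Icc lb ub)) (hlb : lb ≤ w)
    (hw : IsFixedPt f w) (hwub : w ≤ ub) (hub : f ub ≤ ub) (t : ℕ) :
    f^[t] ub ∈ Icc w ub :=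
  (mapsTo_Icc_of_monotoneOn hf hlb hw hub).iterate t ⟨hwub, le_rfl⟩

theorem antitone_iterate_of_monotoneOn (hf : MonotoneOn f (Icc lb ub)) (hlb : lb ≤ w)
    (hw : IsFixedPt f w) (hwub : w ≤ ub) (hub : f ub ≤ ub) :
    Antitone fun t => f^[t] ub := by
  have hmem (t : ℕ) : f^[t] ub ∈ Icc lb ub :=
    Icc_subset_Icc_left hlb (iterate_mem_Icc_of_monotoneOn hf hlb hw hwub hub t)
  refine antitone_nat_of_succ_le fun t => ?_
  induction t with
  | zero => exact hub
  | succ t ih =>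
    simpa only [iterate_succ_apply'] using hf (hmem (t + 1)) (hmem t) ih

end MonotoneOnIterate

theorem exists_tendsto_iterate_isFixedPt_ge {α : Type*} [ConditionallyCompleteLattice α]
    [TopologicalSpace α] [InfConvergenceClass α] [OrderClosedTopology α] {f : α → α} {lb ub w : α}
    (hf : MonotoneOn f (Icc lb ub)) (hcont : Continuous f) (hlb : lb ≤ w)
    (hw : IsFixedPt f w) (hwub : w ≤ ub) (hub : f ub ≤ ub) :
    ∃ x, Tendsto (fun t => f^[t] ub) atTop (𝓝 x) ∧ IsFixedPt f x ∧
      ∀ u ∈ Icc w ub, IsFixedPt f u → u ≤ x := by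
  have hlim : Tendsto (fun t => f^[t] ub) atTop (𝓝 (⨅ t, f^[t] ub)) :=
    tendsto_atTop_ciInf (antitone_iterate_of_monotoneOn hf hlb hw hwub hub)
      ⟨w, forall_mem_range.2 fun t => (iterate_mem_Icc_of_monotoneOn hf hlb hw hwub hub t).1⟩
  refine ⟨_, hlim, isFixedPt_of_tendsto_iterate hlim hcont.continuousAt, ?_⟩
  intro u ⟨hwu, huub⟩ hu
  exact ge_of_tendsto' hlim fun t =>
    (iterate_mem_Icc_of_monotoneOn hf (hlb.trans hwu) hu huub hub t).1

section DCPowerFlow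

variable {ι ι' : Type*} [Fintype ι] [Fintype ι']

noncomputable def dcPowerFlow (g : ι → ι → ℝ) (c k p : ι → ℝ) (u : ι → ℝ) : ι → ℝ :=
  fun n => (∑ m, g n m / c n * √(u n * u m)) + k n / c n * √(u n) - p n / c n

theorem continuous_dcPowerFlow (g : ι → ι → ℝ) (c k p : ι → ℝ) :
    Continuous (dcPowerFlow g c k p) := by
  unfold dcPowerFlow
  fun_prop

theorem dcPowerFlow_const_le {olu : ℝ} (holu : 0 ≤ olu) {g : ι → ι → ℝ} {gV : ι → ι' → ℝ}
    {go c k p io : ι → ℝ} {v : ι' → ℝ} (hgV : ∀ n q, 0 ≤ gV n q)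
    (hc : ∀ n, c n = (∑ m, g n m) + (∑ q, gV n q) + go n) (hcpos : ∀ n, 0 < c n)
    (hk : ∀ n, k n = (∑ q, gV n q * v q) - io n) (hv : ∀ q, v q ≤ √olu)
    (hiii : ∀ n, olu * go n + √olu * io n + p n ≥ 0) :
    dcPowerFlow g c k p (fun _ => olu) ≤ fun _ => olu := by
  intro n
  have hsqrt : √olu * √olu = olu := Real.mul_self_sqrt holu
  have hvolt : (∑ q, gV n q * v q) * √olu ≤ (∑ q, gV n q) * olu := by
    calc (∑ q, gV n q * v q) * √olu ≤ (∑ q, gV n q * √olu) * √olu :=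
          mul_le_mul_of_nonneg_right (sum_le_sum fun q _ =>
            mul_le_mul_of_nonneg_left (hv q) (hgV n q)) (Real.sqrt_nonneg _)
      _ = (∑ q, gV n q) * olu := by rw [← sum_mul, mul_assoc, hsqrt]
  have hnum : (∑ m, g n m) * olu + k n * √olu - p n ≤ c n * olu := by
    rw [hc, hk]
    linarith [hiii n]
  calc dcPowerFlow g c k p (fun _ => olu) n
      = ((∑ m, g n m) * olu + k n * √olu - p n) / c n := by
        simp only [dcPowerFlow, Real.sqrt_mul_self holu, div_mul_eq_mul_div, ← sum_div,
          ← sum_mul]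
        ring
    _ ≤ olu := (div_le_iff₀' (hcpos n)).2 hnum

end DCPowerFlow

theorem monotone_iterates_converge_to_hv_general {P Q : ℕ} (ulu olu : ℝ)
    (g : Fin P → Fin P → ℝ) (gV : Fin P → Fin Q → ℝ)
    (go io c k p : Fin P → ℝ) (v : Fin Q → ℝ)
    (h0 : 0 < ulu) (h1 : ulu ≤ olu)
    (hgV : ∀ n q, 0 ≤ gV n q)
    (hc : ∀ n, c n = (∑ m, g n m) + (∑ q, gV n q) + go n)
    (hcpos : ∀ n, 0 < c n)
    (hk : ∀ n, k n = (∑ q, gV n q * v q) - io n)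
    (hv : ∀ q, v q ≤ Real.sqrt olu)
    (f : (Fin P → ℝ) → (Fin P → ℝ))
    (hf : ∀ u n, f u n = (∑ m, g n m / c n * Real.sqrt (u n * u m))
        + k n / c n * Real.sqrt (u n) - p n / c n)
    (hmono : ∀ u ∈ Set.Icc (fun _ => ulu) (fun _ => olu),
      ∀ u' ∈ Set.Icc (fun _ : Fin P => ulu) (fun _ => olu), u ≤ u' → f u ≤ f u')
    (us : Fin P → ℝ)
    (hus : us ∈ Set.Icc (fun _ => ulu) (fun _ => olu))
    (husfix : f us = us)
    (hiii : ∀ n, olu * go n + Real.sqrt olu * io n + p n ≥ 0) :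
    ∃ uhv : Fin P → ℝ,
      Filter.Tendsto (fun t => f^[t] (fun _ => olu)) Filter.atTop (nhds uhv) ∧
      f uhv = uhv ∧
      ∀ u ∈ Set.Icc us (fun _ => olu), f u = u → u ≤ uhv := by
  obtain rfl : f = dcPowerFlow g c k p := funext fun u => funext (hf u)
  have hsuper := dcPowerFlow_const_le (h0.trans_le h1).le hgV hc hcpos hk hv hiii
  exact exists_tendsto_iterate_isFixedPt_ge hmono (continuous_dcPowerFlow g c k p) hus.1
    husfix hus.2 hsuper

/-- Convergence of the monotone DC power flow iterates started at ū = olu·1 to the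
high-voltage solution, under monotonicity, existence of a solution in U, and
condition (iii): olu·gₙᵒ + √olu·iₙᵒ + pₙᵒ ≥ 0 for all n. -/
theorem monotone_iterates_converge_to_hv {P Q : ℕ} (ulu olu : ℝ)
    (g : Fin P → Fin P → ℝ) (gV : Fin P → Fin Q → ℝ)
    (go io c k p : Fin P → ℝ) (v : Fin Q → ℝ)
    (h0 : 0 < ulu) (h1 : ulu ≤ olu)
    (hg : ∀ n m, 0 ≤ g n m) (hgV : ∀ n q, 0 ≤ gV n q)
    (hgo : ∀ n, 0 ≤ go n) (hio : ∀ n, 0 ≤ io n)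
    (hc : ∀ n, c n = (∑ m, g n m) + (∑ q, gV n q) + go n)
    (hcpos : ∀ n, 0 < c n)
    (hk : ∀ n, k n = (∑ q, gV n q * v q) - io n)
    (hv : ∀ q, v q ≤ Real.sqrt olu)
    (f : (Fin P → ℝ) → (Fin P → ℝ))
    (hf : ∀ u n, f u n = (∑ m, g n m / c n * Real.sqrt (u n * u m))
        + k n / c n * Real.sqrt (u n) - p n / c n)
    (hmono : ∀ u ∈ Set.Icc (fun _ => ulu) (fun _ => olu),
      ∀ u' ∈ Set.Icc (fun _ : Fin P => ulu) (fun _ => olu), u ≤ u' → f u ≤ f u')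
    (us : Fin P → ℝ)
    (hus : us ∈ Set.Icc (fun _ => ulu) (fun _ => olu))
    (husfix : f us = us)
    (hiii : ∀ n, olu * go n + Real.sqrt olu * io n + p n ≥ 0) :
    ∃ uhv : Fin P → ℝ,
      Filter.Tendsto (fun t => f^[t] (fun _ => olu)) Filter.atTop (nhds uhv) ∧
      f uhv = uhv ∧
      ∀ u ∈ Set.Icc us (fun _ => olu), f u = u → u ≤ uhv :=
  monotone_iterates_converge_to_hv_general ulu olu g gV go io c k p v h0 h1 hgV hc hcpos hk hv f hf
    hmono us hus husfix hiii
end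

section
/- Under the assumptions of the monotone mapping theorem with olu·g_n^o + √(olu)·i_n^o + p_n^o ≥ 0 for all n, the mapping f satisfies f(olu·1) ≤ olu·1 entrywise. -/
/-! After clearing the denominator `c n`, the terms `olu * g n m` occur on both sides and cancel.
What remains follows from `√olu * v q ≤ olu`, weighted by `gV n q ≥ 0`, together with (iii). -/

open Finset

theorem Finset.sum_mul_le_mul_sum_of_le {ι : Type*} (s : Finset ι) {w v : ι → ℝ} {b : ℝ}
    (hw : ∀ i ∈ s, 0 ≤ w i) (hv : ∀ i ∈ s, v i ≤ b) :
    ∑ i ∈ s, w i * v i ≤ b * ∑ i ∈ s, w i := by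
  rw [mul_sum]
  exact sum_le_sum fun i hi => by
    rw [mul_comm b]
    exact mul_le_mul_of_nonneg_left (hv i hi) (hw i hi)

theorem mapping_at_upper_corner_le_general {P Q : ℕ} (ulu olu : ℝ)
    (g : Fin P → Fin P → ℝ) (gV : Fin P → Fin Q → ℝ)
    (go io c k p : Fin P → ℝ) (v : Fin Q → ℝ)
    (h0 : 0 < ulu) (h1 : ulu ≤ olu)
    (hgV : ∀ n q, 0 ≤ gV n q)
    (hc : ∀ n, c n = (∑ m, g n m) + (∑ q, gV n q) + go n)
    (hcpos : ∀ n, 0 < c n)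
    (hk : ∀ n, k n = (∑ q, gV n q * v q) - io n)
    (hv : ∀ q, v q ≤ Real.sqrt olu)
    (hiii : ∀ n, olu * go n + Real.sqrt olu * io n + p n ≥ 0) :
    (fun n => (∑ m, g n m / c n * Real.sqrt (olu * olu))
        + k n / c n * Real.sqrt olu - p n / c n)
      ≤ fun _ : Fin P => olu := by
  intro n
  have holu : 0 ≤ olu := h0.le.trans h1
  have hk_le : k n * √olu ≤ olu * ∑ q, gV n q - √olu * io n :=
    calc k n * √olu = √olu * ∑ q, gV n q * v q - √olu * io n := by rw [hk n]; ring
      _ ≤ √olu * (√olu * ∑ q, gV n q) - √olu * io n := by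
        gcongr
        exact sum_mul_le_mul_sum_of_le _ (fun q _ => hgV n q) (fun q _ => hv q)
      _ = olu * ∑ q, gV n q - √olu * io n := by rw [← mul_assoc, Real.mul_self_sqrt holu]
  have hf : (∑ m, g n m / c n * √(olu * olu)) + k n / c n * √olu - p n / c n
      = (olu * ∑ m, g n m + k n * √olu - p n) / c n := by
    rw [Real.sqrt_mul_self holu, mul_sum, sub_div, add_div, sum_div]
    simp only [div_mul_eq_mul_div, mul_comm olu]
  beta_reduce
  rw [hf, div_le_iff₀ (hcpos n), hc n]
  linarith [hiii n]

/-- Under condition (iii), the monotone DC power flow mapping satisfies f(olu·1) ≤ olu·1. -/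
theorem mapping_at_upper_corner_le {P Q : ℕ} (ulu olu : ℝ)
    (g : Fin P → Fin P → ℝ) (gV : Fin P → Fin Q → ℝ)
    (go io c k p : Fin P → ℝ) (v : Fin Q → ℝ)
    (h0 : 0 < ulu) (h1 : ulu ≤ olu)
    (hg : ∀ n m, 0 ≤ g n m) (hgV : ∀ n q, 0 ≤ gV n q)
    (hgo : ∀ n, 0 ≤ go n) (hio : ∀ n, 0 ≤ io n)
    (hc : ∀ n, c n = (∑ m, g n m) + (∑ q, gV n q) + go n)
    (hcpos : ∀ n, 0 < c n)
    (hk : ∀ n, k n = (∑ q, gV n q * v q) - io n)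
    (hv : ∀ q, v q ≤ Real.sqrt olu)
    (hiii : ∀ n, olu * go n + Real.sqrt olu * io n + p n ≥ 0) :
    (fun n => (∑ m, g n m / c n * Real.sqrt (olu * olu))
        + k n / c n * Real.sqrt olu - p n / c n)
      ≤ fun _ : Fin P => olu :=
  mapping_at_upper_corner_le_general ulu olu g gV go io c k p v h0 h1 hgV hc hcpos hk hv hiii
end

section
/- Let Z be a P×P real matrix, k, p ∈ ℝ^P, d := Z·k, and define h(v) := Z(k − D(v)p) where D(v) = diag(1/v_1,...,1/v_P). Let C_R := {v : ‖v − d‖_q ≤ R} for some q ≥ 1 and R > 0, and set underline-d := min_n |d_n|. If (C1) R ≤ underline-d, (C2) R(underline-d − R) ≥ ‖Z‖_q·‖p‖_q, and (C3) (underline-d − R)² > ‖Z‖_q·‖p‖_q, then h is a contraction on C_R: h maps C_R into C_R and ‖h(v) − h(ṽ)‖_q ≤ α‖v − ṽ‖_q for all v, ṽ ∈ C_R with α = ‖Z‖_q‖p‖_q/(underline-d − R)² < 1. -/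
open scoped ENNReal

/-- The ℓ_q norm of a vector in ℝ^P. -/
noncomputable def vnorm (q : ℝ≥0∞) [Fact (1 ≤ q)] {P : ℕ} (x : Fin P → ℝ) : ℝ :=
  ‖(WithLp.equiv q (Fin P → ℝ)).symm x‖

/-- The induced (operator) matrix q-norm of a P×P real matrix. -/
noncomputable def matOpNorm (q : ℝ≥0∞) [Fact (1 ≤ q)] {P : ℕ}
    (Z : Matrix (Fin P) (Fin P) ℝ) : ℝ :=
  ‖LinearMap.toContinuousLinearMap
      ((WithLp.linearEquiv q ℝ (Fin P → ℝ)).symm.toLinearMap ∘ₗ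
        Z.mulVecLin ∘ₗ (WithLp.linearEquiv q ℝ (Fin P → ℝ)).toLinearMap)‖

/-! On the ball `‖v - d‖_q ≤ R` every coordinate satisfies `|v n| ≥ min |d_n| - R =: m > 0`, so
`D(v) p` is controlled coordinatewise: `|p n / v n| ≤ |p n| / m` and
`|p n / ṽ n - p n / v n| ≤ ‖v - ṽ‖_q |p n| / m²`. A coordinatewise bound `|w n| ≤ c |y n|` gives
`‖w‖_q ≤ c ‖y‖_q`, and applying `Z` costs the factor `‖Z‖_q`; (C2) then gives invariance of the
ball and (C3) makes the Lipschitz constant smaller than one. -/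

open Matrix

theorem PiLp.norm_le_norm_of_forall_norm_le {ι : Type*} [Fintype ι] {p : ℝ≥0∞} [Fact (1 ≤ p)]
    {β : ι → Type*} [∀ i, SeminormedAddCommGroup (β i)] {x y : PiLp p β}
    (h : ∀ i, ‖x i‖ ≤ ‖y i‖) : ‖x‖ ≤ ‖y‖ := by
  rcases eq_or_ne p ∞ with rfl | hp
  · rw [PiLp.norm_eq_ciSup, PiLp.norm_eq_ciSup]
    exact ciSup_mono (Set.finite_range _).bddAbove h
  · have hp' : 0 < p.toReal := ENNReal.toReal_pos (zero_lt_one.trans_le Fact.out).ne' hp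
    rw [PiLp.norm_eq_sum hp', PiLp.norm_eq_sum hp']
    gcongr with i
    exact h i

section vnorm

variable {q : ℝ≥0∞} [Fact (1 ≤ q)] {P : ℕ}

lemma vnorm_nonneg (x : Fin P → ℝ) : 0 ≤ vnorm q x := norm_nonneg _

lemma matOpNorm_nonneg (Z : Matrix (Fin P) (Fin P) ℝ) : 0 ≤ matOpNorm q Z := norm_nonneg _

lemma abs_apply_le_vnorm (x : Fin P → ℝ) (n : Fin P) : |x n| ≤ vnorm q x :=
  PiLp.norm_apply_le ((WithLp.equiv q (Fin P → ℝ)).symm x) n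

lemma vnorm_le_mul_of_abs_le {x y : Fin P → ℝ} {c : ℝ} (hc : 0 ≤ c)
    (h : ∀ n, |x n| ≤ c * |y n|) : vnorm q x ≤ c * vnorm q y := by
  have hcy : vnorm q (c • y) = c * vnorm q y := by
    rw [vnorm, WithLp.equiv_symm_apply, WithLp.toLp_smul, norm_smul, Real.norm_of_nonneg hc]; rfl
  rw [← hcy]
  refine PiLp.norm_le_norm_of_forall_norm_le fun n => ?_
  simpa [Real.norm_eq_abs, abs_mul, abs_of_nonneg hc] using h n

lemma vnorm_mulVec_le (Z : Matrix (Fin P) (Fin P) ℝ) (x : Fin P → ℝ) :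
    vnorm q (Z *ᵥ x) ≤ matOpNorm q Z * vnorm q x := by
  simpa [vnorm, matOpNorm, Matrix.mulVecLin] using
    (LinearMap.toContinuousLinearMap ((WithLp.linearEquiv q ℝ (Fin P → ℝ)).symm.toLinearMap ∘ₗ
      Z.mulVecLin ∘ₗ (WithLp.linearEquiv q ℝ (Fin P → ℝ)).toLinearMap)).le_opNorm
      ((WithLp.equiv q (Fin P → ℝ)).symm x)

lemma vnorm_mulVec_le_of_abs_le (Z : Matrix (Fin P) (Fin P) ℝ) {w y : Fin P → ℝ} {c : ℝ}
    (hc : 0 ≤ c) (h : ∀ n, |w n| ≤ c * |y n|) :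
    vnorm q (Z *ᵥ w) ≤ c * (matOpNorm q Z * vnorm q y) := by
  calc vnorm q (Z *ᵥ w) ≤ matOpNorm q Z * (c * vnorm q y) :=
        (vnorm_mulVec_le Z w).trans <|
          mul_le_mul_of_nonneg_left (vnorm_le_mul_of_abs_le hc h) (matOpNorm_nonneg Z)
    _ = c * (matOpNorm q Z * vnorm q y) := by ring

lemma sub_le_abs_of_vnorm_sub_le {v d : Fin P → ℝ} {R : ℝ} (hv : vnorm q (v - d) ≤ R)
    (n : Fin P) : |d n| - R ≤ |v n| := by
  have hvd : |v n - d n| ≤ R := (abs_apply_le_vnorm (v - d) n).trans hv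
  have := abs_sub_abs_le_abs_sub (d n) (v n)
  rw [abs_sub_comm] at this
  linarith

end vnorm

lemma abs_div_le_inv_mul {a v m : ℝ} (hm : 0 < m) (hv : m ≤ |v|) : |a / v| ≤ m⁻¹ * |a| := by
  rw [abs_div, inv_mul_eq_div]
  exact div_le_div_of_nonneg_left (abs_nonneg a) hm hv

lemma abs_div_sub_div_le {a v w m : ℝ} (hm : 0 < m) (hv : m ≤ |v|) (hw : m ≤ |w|) :
    |a / w - a / v| ≤ |v - w| / m ^ 2 * |a| := by
  have hv0 : v ≠ 0 := abs_pos.1 (hm.trans_le hv)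
  have hw0 : w ≠ 0 := abs_pos.1 (hm.trans_le hw)
  have hvw : m ^ 2 ≤ |v| * |w| := by
    rw [sq]; exact mul_le_mul hv hw hm.le (abs_nonneg v)
  calc |a / w - a / v| = |a| * |v - w| / (|v| * |w|) := by
        rw [div_sub_div _ _ hw0 hv0, show a * v - w * a = a * (v - w) by ring, abs_div, abs_mul,
          abs_mul, mul_comm |w|]
    _ ≤ |a| * |v - w| / m ^ 2 := by gcongr
    _ = |v - w| / m ^ 2 * |a| := by ring

theorem zbus_contraction_general {P : ℕ} (q : ℝ≥0∞) [Fact (1 ≤ q)]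
    (Z : Matrix (Fin P) (Fin P) ℝ) (k p : Fin P → ℝ) (R : ℝ)
    (d : Fin P → ℝ) (hd : d = Z.mulVec k)
    (h : (Fin P → ℝ) → (Fin P → ℝ))
    (hh : ∀ v, h v = Z.mulVec (fun n => k n - p n / v n))
    (ud : ℝ) (hud : ud = ⨅ n, |d n|)
    (hC1 : R ≤ ud)
    (hC2 : R * (ud - R) ≥ matOpNorm q Z * vnorm q p)
    (hC3 : (ud - R) ^ 2 > matOpNorm q Z * vnorm q p) :
    (∀ v : Fin P → ℝ, vnorm q (v - d) ≤ R → vnorm q (h v - d) ≤ R) ∧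
    matOpNorm q Z * vnorm q p / (ud - R) ^ 2 < 1 ∧
    (∀ v vt : Fin P → ℝ, vnorm q (v - d) ≤ R → vnorm q (vt - d) ≤ R →
      vnorm q (h v - h vt) ≤ (matOpNorm q Z * vnorm q p / (ud - R) ^ 2) * vnorm q (v - vt)) := by
  have hNp := mul_nonneg (matOpNorm_nonneg (q := q) Z) (vnorm_nonneg (q := q) p)
  have hm : 0 < ud - R := (sub_nonneg.2 hC1).lt_of_ne' fun h0 => by
    rw [h0] at hC3; linarith
  have hball : ∀ v, vnorm q (v - d) ≤ R → ∀ n, ud - R ≤ |v n| := fun v hv n => by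
    have hud_le : ud ≤ |d n| := hud ▸ ciInf_le (Set.finite_range _).bddBelow n
    linarith [sub_le_abs_of_vnorm_sub_le hv n]
  refine ⟨fun v hv => ?_, (div_lt_one (pow_pos hm 2)).2 hC3, fun v vt hv hvt => ?_⟩
  · have hvd : h v - d = Z *ᵥ fun n => -(p n / v n) := by
      rw [hh, hd, ← Matrix.mulVec_sub]; congr 1; ext n; simp
    calc vnorm q (h v - d) ≤ (ud - R)⁻¹ * (matOpNorm q Z * vnorm q p) := by
          rw [hvd]
          exact vnorm_mulVec_le_of_abs_le Z (inv_nonneg.2 hm.le) fun n => by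
            rw [abs_neg]; exact abs_div_le_inv_mul hm (hball v hv n)
      _ ≤ R := by rw [inv_mul_le_iff₀ hm]; linarith
  · have hvvt : h v - h vt = Z *ᵥ fun n => p n / vt n - p n / v n := by
      rw [hh, hh, ← Matrix.mulVec_sub]; congr 1; ext n; simp
    calc vnorm q (h v - h vt)
        ≤ vnorm q (v - vt) / (ud - R) ^ 2 * (matOpNorm q Z * vnorm q p) := by
          rw [hvvt]
          refine vnorm_mulVec_le_of_abs_le Z
            (div_nonneg (vnorm_nonneg _) (sq_nonneg _)) fun n => ?_
          calc |p n / vt n - p n / v n| ≤ |v n - vt n| / (ud - R) ^ 2 * |p n| :=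
                abs_div_sub_div_le hm (hball v hv n) (hball vt hvt n)
            _ ≤ vnorm q (v - vt) / (ud - R) ^ 2 * |p n| := by
                gcongr; exact abs_apply_le_vnorm (v - vt) n
      _ = _ := by ring

/-- The Z-bus mapping h(v) = Z(k − D(v)p) is a contraction on the ball C_R around
d = Z·k under conditions (C1)–(C3). -/
theorem zbus_contraction {P : ℕ} (hP : 0 < P) (q : ℝ≥0∞) [Fact (1 ≤ q)]
    (Z : Matrix (Fin P) (Fin P) ℝ) (k p : Fin P → ℝ) (R : ℝ) (hR : 0 < R)
    (d : Fin P → ℝ) (hd : d = Z.mulVec k)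
    (h : (Fin P → ℝ) → (Fin P → ℝ))
    (hh : ∀ v, h v = Z.mulVec (fun n => k n - p n / v n))
    (ud : ℝ) (hud : ud = ⨅ n, |d n|)
    (hC1 : R ≤ ud)
    (hC2 : R * (ud - R) ≥ matOpNorm q Z * vnorm q p)
    (hC3 : (ud - R) ^ 2 > matOpNorm q Z * vnorm q p) :
    (∀ v : Fin P → ℝ, vnorm q (v - d) ≤ R → vnorm q (h v - d) ≤ R) ∧
    matOpNorm q Z * vnorm q p / (ud - R) ^ 2 < 1 ∧
    (∀ v vt : Fin P → ℝ, vnorm q (v - d) ≤ R → vnorm q (vt - d) ≤ R →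
      vnorm q (h v - h vt) ≤ (matOpNorm q Z * vnorm q p / (ud - R) ^ 2) * vnorm q (v - vt)) :=
  zbus_contraction_general q Z k p R d hd h hh ud hud hC1 hC2 hC3
end

section
/- Let ρ° be a solution of the DC power flow equations c_n e^{ρ_n} − Σ_m g_{nm} e^{(ρ_n+ρ_m)/2} − k_n e^{ρ_n/2} + p_n^o = 0 with ulu ≤ e^{ρ_n°} ≤ olu for all n. If max{p_n^o, 0} ≤ λ_min(G)·ulu for all n, then the Hessian of the energy function E at ρ° is positive semidefinite. -/
/-!
At a power flow solution the power balance equation eliminates `k` from the diagonal of the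
Hessian, leaving `H(ρ°) = D (½ (G - diag(p_n e^{-ρ_n°}))) D` with `D = diag(e^{ρ_n°/2})`.
The box gives `p_n e^{-ρ_n°} ≤ max{p_n, 0}/ulu ≤ λ_min(G)`, so the middle factor dominates
`½ (G - λ_min(G) I) ⪰ 0` (Weyl), and a congruence by `D` preserves positive semidefiniteness.
-/

open Finset Real

/-- The Hessian matrix of the DC energy function. -/
noncomputable def energyHessian {P : ℕ} (c k : Fin P → ℝ) (g : Fin P → Fin P → ℝ)
    (ρ : Fin P → ℝ) : Matrix (Fin P) (Fin P) ℝ :=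
  Matrix.of fun n m =>
    if n = m then
      Real.exp (ρ n / 2) * (c n * Real.exp (ρ n / 2) - k n / 2
        - ∑ l, g n l / 2 * Real.exp (ρ l / 2))
    else -(g n m / 2) * Real.exp ((ρ n + ρ m) / 2)

/-- The matrix G with G_nn = c_n and G_nm = −g_nm off the diagonal. -/
def gMat {P : ℕ} (c : Fin P → ℝ) (g : Fin P → Fin P → ℝ) : Matrix (Fin P) (Fin P) ℝ :=
  Matrix.of fun n m => if n = m then c n else -(g n m)

namespace Matrix

open scoped ComplexOrder

variable {𝕜 ι : Type*} [RCLike 𝕜] [Fintype ι] [DecidableEq ι] {A : Matrix ι ι 𝕜}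

theorem IsHermitian.posSemidef_sub_algebraMap (hA : A.IsHermitian) {c : ℝ}
    (hc : ∀ i, c ≤ hA.eigenvalues i) : (A - algebraMap 𝕜 _ c).PosSemidef := by
  refine posSemidef_iff_isHermitian_and_spectrum_nonneg.mpr
    ⟨hA.sub (IsSelfAdjoint.algebraMap _ (RCLike.conj_ofReal c)), ?_⟩
  rw [← spectrum.sub_singleton_eq, hA.spectrum_eq_image_range]
  rintro _ ⟨_, ⟨_, ⟨i, rfl⟩, rfl⟩, _, rfl, rfl⟩
  change 0 ≤ (hA.eigenvalues i : 𝕜) - c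
  rw [← RCLike.ofReal_sub]
  exact RCLike.ofReal_nonneg.mpr <| sub_nonneg.mpr (hc i)

theorem IsHermitian.posSemidef_sub_diagonal (hA : A.IsHermitian) {d : ι → ℝ}
    (hd : ∀ i, d i ≤ ⨅ j, hA.eigenvalues j) :
    (A - diagonal fun i => (d i : 𝕜)).PosSemidef := by
  set lam := ⨅ j, hA.eigenvalues j
  rw [← sub_add_sub_cancel A (algebraMap 𝕜 _ lam)]
  refine (hA.posSemidef_sub_algebraMap fun i => ciInf_le (Finite.bddBelow_range _) i).add ?_
  rw [algebraMap_eq_diagonal, diagonal_sub]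
  refine posSemidef_diagonal_iff.mpr fun i => ?_
  rw [Pi.algebraMap_apply, Algebra.algebraMap_self_apply, ← RCLike.ofReal_sub]
  exact RCLike.ofReal_nonneg.mpr <| sub_nonneg.mpr (hd i)

end Matrix

open Matrix

theorem energyHessian_eq_of_solution {P : ℕ} {c k p : Fin P → ℝ} {g : Fin P → Fin P → ℝ}
    {ρ : Fin P → ℝ}
    (hsol : ∀ n, c n * exp (ρ n) - (∑ m, g n m * exp ((ρ n + ρ m) / 2))
        - k n * exp (ρ n / 2) + p n = 0) :
    energyHessian c k g ρ = diagonal (fun n => exp (ρ n / 2)) *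
      ((1 / 2 : ℝ) • (gMat c g - diagonal fun n => p n / exp (ρ n))) *
      diagonal (fun n => exp (ρ n / 2)) := by
  have hexp : ∀ n, exp (ρ n) = exp (ρ n / 2) * exp (ρ n / 2) := fun n => by
    rw [← exp_add, add_halves]
  have hexp₂ : ∀ n m, exp ((ρ n + ρ m) / 2) = exp (ρ n / 2) * exp (ρ m / 2) := fun n m => by
    rw [← exp_add, add_div]
  ext n m
  rw [mul_diagonal, diagonal_mul]
  by_cases hnm : n = m
  · subst hnm
    have hsum : ∑ m, g n m * exp ((ρ n + ρ m) / 2) =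
        2 * exp (ρ n / 2) * ∑ l, g n l / 2 * exp (ρ l / 2) := by
      rw [mul_sum]
      exact sum_congr rfl fun l _ => by rw [hexp₂]; ring
    have h := hsol n
    rw [hsum, hexp] at h
    have hinv : exp (ρ n / 2) * exp (ρ n / 2) * (exp (ρ n / 2) * exp (ρ n / 2))⁻¹ = 1 :=
      mul_inv_cancel₀ (by positivity)
    simp only [energyHessian, gMat, of_apply, ↓reduceIte, Matrix.smul_apply, Matrix.sub_apply,
      diagonal_apply_eq, hexp, smul_eq_mul]
    linear_combination (1 / 2 : ℝ) * h + (p n / 2) * hinv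
  · simp only [energyHessian, gMat, of_apply, hnm, ↓reduceIte, Matrix.smul_apply,
      Matrix.sub_apply, ne_eq, not_false_eq_true, diagonal_apply_ne, sub_zero, smul_eq_mul, hexp₂]
    ring

theorem energy_convex_at_solution_general {P : ℕ} (ulu olu : ℝ)
    (c k p : Fin P → ℝ) (g : Fin P → Fin P → ℝ)
    (h0 : 0 < ulu)
    (hG : (gMat c g).IsHermitian)
    (ρ0 : Fin P → ℝ)
    (hsol : ∀ n, c n * Real.exp (ρ0 n) - (∑ m, g n m * Real.exp ((ρ0 n + ρ0 m) / 2))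
        - k n * Real.exp (ρ0 n / 2) + p n = 0)
    (hbox : ∀ n, ulu ≤ Real.exp (ρ0 n) ∧ Real.exp (ρ0 n) ≤ olu)
    (hcond : ∀ n, max (p n) 0 ≤ (⨅ i, hG.eigenvalues i) * ulu) :
    (energyHessian c k g ρ0).PosSemidef := by
  have hbound : ∀ n, p n / exp (ρ0 n) ≤ ⨅ i, hG.eigenvalues i := fun n =>
    calc p n / exp (ρ0 n) ≤ max (p n) 0 / exp (ρ0 n) := by gcongr; exact le_max_left _ _
      _ ≤ max (p n) 0 / ulu := div_le_div_of_nonneg_left (le_max_right _ _) h0 (hbox n).1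
      _ ≤ ⨅ i, hG.eigenvalues i := (div_le_iff₀ h0).mpr (hcond n)
  have hmid := (hG.posSemidef_sub_diagonal hbound).smul (show (0 : ℝ) ≤ 1 / 2 by norm_num)
  rw [energyHessian_eq_of_solution hsol]
  simpa using hmid.mul_mul_conjTranspose_same (diagonal fun n => exp (ρ0 n / 2))

/-- At any power flow solution ρ° in the voltage box, if max{p_n^o, 0} ≤ λ_min(G)·ulu
for all n, then the Hessian of the energy function at ρ° is positive semidefinite. -/
theorem energy_convex_at_solution {P : ℕ} (ulu olu : ℝ)
    (c k p : Fin P → ℝ) (g : Fin P → Fin P → ℝ)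
    (h0 : 0 < ulu) (h1 : ulu ≤ olu)
    (hsym : ∀ n m, g n m = g m n) (hdiag : ∀ n, g n n = 0)
    (hg : ∀ n m, 0 ≤ g n m) (hc : ∀ n, 0 < c n)
    (hG : (gMat c g).IsHermitian) (hGpd : (gMat c g).PosDef)
    (ρ0 : Fin P → ℝ)
    (hsol : ∀ n, c n * Real.exp (ρ0 n) - (∑ m, g n m * Real.exp ((ρ0 n + ρ0 m) / 2))
        - k n * Real.exp (ρ0 n / 2) + p n = 0)
    (hbox : ∀ n, ulu ≤ Real.exp (ρ0 n) ∧ Real.exp (ρ0 n) ≤ olu)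
    (hcond : ∀ n, max (p n) 0 ≤ (⨅ i, hG.eigenvalues i) * ulu) :
    (energyHessian c k g ρ0).PosSemidef :=
  energy_convex_at_solution_general ulu olu c k p g h0 hG ρ0 hsol hbox hcond
end
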